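/- Let (F=(V;E,A),M,S,π) be a matroid-based rooted mixed graph. Suppose π is M-independent and condition (ii) holds: e_E(P) + Σ_{q=1}^t d_A^-(X^q) ≥ Σ_{q=1}^t ( r_M(S_{W(V(C))}) − r_M(S_{(X^q)_O}) ) for all families of bi-sets {X^1,...,X^t} with inner sets forming a subpartition of a strong component C and (X^q)_O \ (X^q)_I = W(Y^q) for some Y^q ⊆ W(V(C)) \ V(C). Then condition (iii) holds: e_E(P) ≥ Σ_{q=1}^t f_C(X_q) for every strong component C and subpartition {X_1,...,X_t} of V(C), where f_C(X_q) = max{ r_M(S_{W(V(C))}) − r_M(S_X) − d_A^-(X) : X_q ⊆ X, X \ X_q = W(Y), Y ⊆ W(V(C)) \ V(C) }. -/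

import Mathlib

open Set

section Defs

variable {V A E S : Type}

/-- In-degree of a vertex set: number of arcs with tail outside `X` and head in `X`. -/
noncomputable def din (tl hd : A → V) (X : Set V) : ℕ :=
  {a | tl a ∉ X ∧ hd a ∈ X}.ncard

/-- One step in a mixed graph: an arc used forwards, or an edge used in either direction. -/
def mstep (tl hd : A → V) (e1 e2 : E → V) (u v : V) : Prop :=
  (∃ a, tl a = u ∧ hd a = v) ∨ (∃ e, (e1 e = u ∧ e2 e = v) ∨ (e2 e = u ∧ e1 e = v))

/-- Mixed reachability. -/
def mreach (tl hd : A → V) (e1 e2 : E → V) : V → V → Prop :=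
  Relation.ReflTransGen (mstep tl hd e1 e2)

/-- `Wset X` is `X` together with all vertices from which `X` is reachable. -/
def Wset (tl hd : A → V) (e1 e2 : E → V) (X : Set V) : Set V :=
  {v | ∃ x ∈ X, mreach tl hd e1 e2 v x}

/-- `Uset r` is the set of vertices reachable from `r`. -/
def Uset (tl hd : A → V) (e1 e2 : E → V) (r : V) : Set V :=
  {v | mreach tl hd e1 e2 r v}

/-- Pure digraph reachability-closure (no undirected edges). -/
def dW (tl hd : A → V) (X : Set V) : Set V :=
  Wset tl hd (Empty.elim : Empty → V) (Empty.elim : Empty → V) X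

/-- Pure digraph reachability set from a root. -/
def dU (tl hd : A → V) (r : V) : Set V :=
  Uset tl hd (Empty.elim : Empty → V) (Empty.elim : Empty → V) r

/-- `B` is the arc set of an `r`-arborescence with vertex set `VT`:
every arc of `B` stays in `VT`, no arc of `B` enters `r`, every other vertex of `VT`
has exactly one entering arc of `B`, and every vertex of `VT` is reachable from `r`
using arcs of `B`. -/
def IsArbOn (tl hd : A → V) (B : Set A) (r : V) (VT : Set V) : Prop :=
  r ∈ VT ∧ (∀ a ∈ B, tl a ∈ VT ∧ hd a ∈ VT) ∧ (∀ a ∈ B, hd a ≠ r) ∧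
  (∀ v ∈ VT, v ≠ r → ∃! a, a ∈ B ∧ hd a = v) ∧
  (∀ v ∈ VT, Relation.ReflTransGen (fun x y => ∃ a ∈ B, tl a = x ∧ hd a = y) r v)

/-- A matroid on `S`, presented by its rank function. -/
structure RankFn (S : Type) where
  r : Set S → ℕ
  mono : ∀ {X Y : Set S}, X ⊆ Y → r X ≤ r Y
  submodular : ∀ X Y : Set S, r (X ∪ Y) + r (X ∩ Y) ≤ r X + r Y
  le_ncard : ∀ X : Set S, r X ≤ X.ncard
  rank_empty : r ∅ = 0

/-- Independence in a matroid given by its rank function. -/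
def RankFn.Indep (M : RankFn S) (X : Set S) : Prop := M.r X = X.ncard

/-- `π` is `M`-independent: the multiset of roots placed at each vertex is independent. -/
def MIndep (M : RankFn S) (π : S → V) : Prop := ∀ v : V, M.Indep (π ⁻¹' {v})

/-- `C` is the vertex set of a strong component of the mixed graph. -/
def IsStrongComp (tl hd : A → V) (e1 e2 : E → V) (C : Set V) : Prop :=
  C.Nonempty ∧ (∀ u ∈ C, ∀ v ∈ C, mreach tl hd e1 e2 u v) ∧
  (∀ v : V, (∃ u ∈ C, mreach tl hd e1 e2 u v ∧ mreach tl hd e1 e2 v u) → v ∈ C)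

/-- Number of undirected edges joining two distinct parts of the subpartition `P`,
or joining a part of `P` to the complement of the union of the parts. -/
noncomputable def eP {t : ℕ} (e1 e2 : E → V) (P : Fin t → Set V) : ℕ :=
  {e | (∃ q, e1 e ∈ P q ∨ e2 e ∈ P q) ∧ ¬ ∃ q, e1 e ∈ P q ∧ e2 e ∈ P q}.ncard

/-- Tail map of the digraph obtained by keeping all arcs and orienting each edge by `o`. -/
def ctl (tl : A → V) (e1 e2 : E → V) (o : E → Bool) : A ⊕ E → V
  | .inl a => tl a
  | .inr e => if o e then e1 e else e2 e

/-- Head map of the digraph obtained by keeping all arcs and orienting each edge by `o`. -/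
def chd (hd : A → V) (e1 e2 : E → V) (o : E → Bool) : A ⊕ E → V
  | .inl a => hd a
  | .inr e => if o e then e2 e else e1 e

/-- Existence of a maximal `M`-independent packing of mixed arborescences in
`(F = (V; E, A), M, S, π)`: there is an orientation of the undirected edges and
pairwise edge- and arc-disjoint arborescences `T_s` rooted at `π s`, such that at each
vertex `v` the set of indices `s` with `v ∈ V(T_s)` is independent in `M` and has
cardinality `r_M(S_{W(v)})` (with `W` the mixed-reachability closure). -/
def MaxIndMixedPacking (tl hd : A → V) (e1 e2 : E → V) (M : RankFn S) (π : S → V) : Prop :=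
  ∃ (o : E → Bool) (B : S → Set (A ⊕ E)) (VT : S → Set V),
    (∀ s s' : S, s ≠ s' → Disjoint (B s) (B s')) ∧
    (∀ s, IsArbOn (ctl tl e1 e2 o) (chd hd e1 e2 o) (B s) (π s) (VT s)) ∧
    (∀ v : V, M.Indep {s | v ∈ VT s} ∧
      ({s | v ∈ VT s}).ncard = M.r (π ⁻¹' Wset tl hd e1 e2 {v}))

/-- The function `f_C` from Theorem (iii):
`f_C(X) = max { r_M(S_{W(V(C))}) − r_M(S_{X₀}) − d_A^-(X₀) :
X ⊆ X₀, X₀ \ X = W(Y) for some Y ⊆ W(V(C)) \ V(C) }`. -/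
noncomputable def fC (tl hd : A → V) (e1 e2 : E → V) (M : RankFn S) (π : S → V)
    (C : Set V) (X : Set V) : ℤ :=
  sSup {z : ℤ | ∃ X0 : Set V, X ⊆ X0 ∧
    (∃ Y ⊆ Wset tl hd e1 e2 C \ C, X0 \ X = Wset tl hd e1 e2 Y) ∧
    z = (M.r (π ⁻¹' Wset tl hd e1 e2 C) : ℤ) - M.r (π ⁻¹' X0) - din tl hd X0}

end Defs

/-!
Pick for each part `P q` a set `X₀ ⊇ P q` attaining the maximum in `f_C(P q)` (the values are
bounded by `r_M(S_{W(C)})`, and `X₀ = P q`, `Y = ∅` is admissible), and apply (ii) to the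
bi-sets `(X₀, P q)`: an arc entering `P q` from outside `X₀` enters `X₀`, so the bi-set
in-degrees are bounded by the `d_A^-(X₀)` subtracted in `f_C`.
-/

section FC

variable {V A E S : Type} (tl hd : A → V) (e1 e2 : E → V)

@[simp]
theorem Wset_empty : Wset tl hd e1 e2 ∅ = ∅ := by
  ext v
  simp [Wset]

theorem exists_fC_eq (M : RankFn S) (π : S → V) (C X : Set V) :
    ∃ X0 : Set V, X ⊆ X0 ∧ (∃ Y ⊆ Wset tl hd e1 e2 C \ C, X0 \ X = Wset tl hd e1 e2 Y) ∧
      fC tl hd e1 e2 M π C X =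
        (M.r (π ⁻¹' Wset tl hd e1 e2 C) : ℤ) - M.r (π ⁻¹' X0) - din tl hd X0 := by
  refine Int.csSup_mem (s := {z : ℤ | ∃ X0 : Set V, X ⊆ X0 ∧
      (∃ Y ⊆ Wset tl hd e1 e2 C \ C, X0 \ X = Wset tl hd e1 e2 Y) ∧
      z = (M.r (π ⁻¹' Wset tl hd e1 e2 C) : ℤ) - M.r (π ⁻¹' X0) - din tl hd X0})
    ⟨_, X, subset_rfl, ⟨∅, empty_subset _, by simp⟩, rfl⟩ ⟨M.r (π ⁻¹' Wset tl hd e1 e2 C), ?_⟩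
  rintro z ⟨X0, -, -, rfl⟩
  omega

theorem ncard_arcs_into_inner_le_din [Finite A] {XO XI : Set V} (h : XI ⊆ XO) :
    {a : A | tl a ∉ XO ∧ hd a ∈ XI}.ncard ≤ din tl hd XO :=
  ncard_le_ncard (fun _ ⟨hout, hin⟩ => ⟨hout, h hin⟩)

end FC

theorem biset_condition_implies_fC_condition_general
    {V A E S : Type} [Fintype A]
    (tl hd : A → V) (e1 e2 : E → V) (M : RankFn S) (π : S → V)
    (hii : ∀ C : Set V, IsStrongComp tl hd e1 e2 C →
      ∀ (t : ℕ) (XO XI : Fin t → Set V),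
        (∀ q, (XI q).Nonempty) → (∀ q, XI q ⊆ C) →
        (∀ q q', q ≠ q' → Disjoint (XI q) (XI q')) →
        (∀ q, XI q ⊆ XO q) →
        (∀ q, ∃ Y ⊆ Wset tl hd e1 e2 C \ C, XO q \ XI q = Wset tl hd e1 e2 Y) →
        (∑ q, ((M.r (π ⁻¹' Wset tl hd e1 e2 C) : ℤ) - M.r (π ⁻¹' XO q))) ≤
          (eP e1 e2 XI : ℤ) +
            ∑ q, (({a : A | tl a ∉ XO q ∧ hd a ∈ XI q}).ncard : ℤ)) :
    ∀ C : Set V, IsStrongComp tl hd e1 e2 C →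
      ∀ (t : ℕ) (P : Fin t → Set V), (∀ q, (P q).Nonempty) → (∀ q, P q ⊆ C) →
        (∀ q q', q ≠ q' → Disjoint (P q) (P q')) →
        ∑ q, fC tl hd e1 e2 M π C (P q) ≤ (eP e1 e2 P : ℤ) := by
  intro C hC t P hne hsub hdisj
  choose X0 hPX0 hX0 hfC using fun q => exists_fC_eq tl hd e1 e2 M π C (P q)
  have hbiset := hii C hC t X0 P hne hsub hdisj hPX0 hX0
  have hdin : ∑ q, (({a : A | tl a ∉ X0 q ∧ hd a ∈ P q}).ncard : ℤ) ≤
      ∑ q, (din tl hd (X0 q) : ℤ) :=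
    Finset.sum_le_sum fun q _ => by exact_mod_cast ncard_arcs_into_inner_le_din tl hd (hPX0 q)
  calc ∑ q, fC tl hd e1 e2 M π C (P q)
      = ∑ q, ((M.r (π ⁻¹' Wset tl hd e1 e2 C) : ℤ) - M.r (π ⁻¹' X0 q)) -
          ∑ q, (din tl hd (X0 q) : ℤ) := by
        rw [← Finset.sum_sub_distrib]
        exact Finset.sum_congr rfl fun q _ => hfC q
    _ ≤ eP e1 e2 P := by linarith

/-- **(ii) ⇒ (iii).** If `π` is `M`-independent and the bi-set condition (ii) holds, then
the subpartition condition (iii) with the function `f_C` holds. -/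
theorem biset_condition_implies_fC_condition
    {V A E S : Type} [Fintype V] [Fintype A] [Fintype E] [Fintype S] [DecidableEq V]
    (tl hd : A → V) (e1 e2 : E → V) (M : RankFn S) (π : S → V)
    (hind : MIndep M π)
    (hii : ∀ C : Set V, IsStrongComp tl hd e1 e2 C →
      ∀ (t : ℕ) (XO XI : Fin t → Set V),
        (∀ q, (XI q).Nonempty) → (∀ q, XI q ⊆ C) →
        (∀ q q', q ≠ q' → Disjoint (XI q) (XI q')) →
        (∀ q, XI q ⊆ XO q) →
        (∀ q, ∃ Y ⊆ Wset tl hd e1 e2 C \ C, XO q \ XI q = Wset tl hd e1 e2 Y) →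
        (∑ q, ((M.r (π ⁻¹' Wset tl hd e1 e2 C) : ℤ) - M.r (π ⁻¹' XO q))) ≤
          (eP e1 e2 XI : ℤ) +
            ∑ q, (({a : A | tl a ∉ XO q ∧ hd a ∈ XI q}).ncard : ℤ)) :
    ∀ C : Set V, IsStrongComp tl hd e1 e2 C →
      ∀ (t : ℕ) (P : Fin t → Set V), (∀ q, (P q).Nonempty) → (∀ q, P q ⊆ C) →
        (∀ q q', q ≠ q' → Disjoint (P q) (P q')) →
        ∑ q, fC tl hd e1 e2 M π C (P q) ≤ (eP e1 e2 P : ℤ) :=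
  biset_condition_implies_fC_condition_general tl hd e1 e2 M π hii
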